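/- Let m > 0, ω > 0, and let h satisfy 0 < hω < 2. Define the shadow frequency ω'(h) = (1/h)·arccos(1 − h²ω²/2) and the shadow mass m'(h) = mω·√(1 − h²ω²/4)/ω'(h). Then the exact harmonic-oscillator flow of the shadow system over one time step equals the velocity-Verlet step of the original system: [[cos(ω'h), sin(ω'h)/(m'ω')], [−m'ω' sin(ω'h), cos(ω'h)]] = M_VV(h), i.e. the 2×2 matrices agree entrywise. -/

import Mathlib

/-! With `x = hω`, the shadow phase `ω'h = arccos (1 - x²/2)` has cosine and sine equal to the
diagonal entry of `M_VV` and to `x √(1 - x²/4)`; since `m'ω' = mω √(1 - x²/4)` by construction,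
the off-diagonal entries of the shadow flow reduce to those of `M_VV` as well. -/

open Matrix

/-- The velocity-Verlet transition matrix for the harmonic oscillator. -/
noncomputable def MVV (m ω h : ℝ) : Matrix (Fin 2) (Fin 2) ℝ :=
  !![1 - h ^ 2 * ω ^ 2 / 2, h / m;
     -h * m * ω ^ 2 * (1 - h ^ 2 * ω ^ 2 / 4), 1 - h ^ 2 * ω ^ 2 / 2]

open Real

lemma cos_arccos_one_sub_sq_div_two {x : ℝ} (hx : x ^ 2 ≤ 4) :
    cos (arccos (1 - x ^ 2 / 2)) = 1 - x ^ 2 / 2 :=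
  cos_arccos (by linarith) (by linarith [sq_nonneg x])

lemma sin_arccos_one_sub_sq_div_two {x : ℝ} (hx : 0 ≤ x) :
    sin (arccos (1 - x ^ 2 / 2)) = x * √(1 - x ^ 2 / 4) := by
  rw [sin_arccos, show 1 - (1 - x ^ 2 / 2) ^ 2 = x ^ 2 * (1 - x ^ 2 / 4) by ring,
    sqrt_mul (sq_nonneg x), sqrt_sq hx]

theorem velocity_verlet_shadow_flow
    (m ω h : ℝ)
    (h₁ : 0 < h * ω) (h₂ : h * ω < 2)
    (ω' m' : ℝ)
    (hω' : ω' = (1 / h) * Real.arccos (1 - h ^ 2 * ω ^ 2 / 2))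
    (hm' : m' = m * ω * Real.sqrt (1 - h ^ 2 * ω ^ 2 / 4) / ω') :
    !![Real.cos (ω' * h), Real.sin (ω' * h) / (m' * ω');
       -m' * ω' * Real.sin (ω' * h), Real.cos (ω' * h)] = MVV m ω h := by
  have hh : h ≠ 0 := left_ne_zero_of_mul h₁.ne'
  have hω : ω ≠ 0 := right_ne_zero_of_mul h₁.ne'
  rw [MVV, ← mul_pow] at *
  set x := h * ω
  set s := √(1 - x ^ 2 / 4)
  have hs : 0 < s := sqrt_pos.2 (by nlinarith)
  have hss : s * s = 1 - x ^ 2 / 4 := mul_self_sqrt (by nlinarith)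
  have hphase : ω' * h = arccos (1 - x ^ 2 / 2) := by
    rw [hω']
    field_simp
  have hcos : cos (ω' * h) = 1 - x ^ 2 / 2 :=
    hphase ▸ cos_arccos_one_sub_sq_div_two (by nlinarith)
  have hsin : sin (ω' * h) = x * s := hphase ▸ sin_arccos_one_sub_sq_div_two h₁.le
  have hω'0 : ω' ≠ 0 := by
    rw [hω']
    exact mul_ne_zero (one_div_ne_zero hh) (arccos_pos.2 (by nlinarith)).ne'
  have hmass : m' * ω' = m * ω * s := by rw [hm', div_mul_cancel₀ _ hω'0]
  have hgain : x * s / (m' * ω') = h / m := by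
    rw [hmass, mul_div_mul_right _ _ hs.ne', mul_div_mul_right _ _ hω]
  have hforce : -m' * ω' * (x * s) = -h * m * ω ^ 2 * (1 - x ^ 2 / 4) := by
    rw [neg_mul, hmass, ← hss]
    ring
  rw [hcos, hsin, hgain, hforce]
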